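/- If a Banach space Y has the Schur property, then for every reflexive Banach space X the pair (X,Y) has the weak minimizing property. -/

import Mathlib

/-! A minimizing sequence that is not weakly null has, by reflexivity, a subsequence converging
weakly to some `x ≠ 0`. Its image under `T` converges weakly to `T x`, hence in norm by the Schur
property. Then `‖T x‖ = m(T)`, and `m(T) ‖xₙ - x‖ ≤ ‖T xₙ - T x‖ → 0` forces `m(T) ‖x‖ = m(T)`,
so `x / ‖x‖` attains the minimum modulus.

Weak sequential compactness of balls in a reflexive, possibly non-separable, space is obtained
inside the closed span `Z` of the sequence: `Z` is weakly closed, a diagonal subsequence makes a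
countable family of functionals separating the points of `Z` converge, so the subsequence has a
unique weak cluster point in the weakly compact ball. -/

open Filter Topology

noncomputable def minMod {X Y : Type*} [NormedAddCommGroup X] [NormedSpace ℝ X]
    [NormedAddCommGroup Y] [NormedSpace ℝ Y] (T : X →L[ℝ] Y) : ℝ :=
  sInf {r : ℝ | ∃ x : X, ‖x‖ = 1 ∧ ‖T x‖ = r}

def WeaklyNull {X : Type*} [NormedAddCommGroup X] [NormedSpace ℝ X] (x : ℕ → X) : Prop :=
  ∀ f : X →L[ℝ] ℝ, Tendsto (fun n => f (x n)) atTop (𝓝 0)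

def AttainsMinMod {X Y : Type*} [NormedAddCommGroup X] [NormedSpace ℝ X]
    [NormedAddCommGroup Y] [NormedSpace ℝ Y] (T : X →L[ℝ] Y) : Prop :=
  ∃ x : X, ‖x‖ = 1 ∧ ‖T x‖ = minMod T

def PairPropM (X Y : Type*) [NormedAddCommGroup X] [NormedSpace ℝ X]
    [NormedAddCommGroup Y] [NormedSpace ℝ Y] : Prop :=
  ∀ T : X →L[ℝ] Y, 1 ≤ minMod T →
    ∀ (x : X) (y : Y), ‖x‖ ≤ ‖y‖ → ∀ xs : ℕ → X, WeaklyNull xs →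
      limsup (fun n => ‖x + xs n‖) atTop ≤ limsup (fun n => ‖y + T (xs n)‖) atTop

def PairPropO (X Y : Type*) [NormedAddCommGroup X] [NormedSpace ℝ X]
    [NormedAddCommGroup Y] [NormedSpace ℝ Y] : Prop :=
  ∀ T : X →L[ℝ] Y, 1 ≤ minMod T →
    ∀ y : Y, y ≠ 0 → ∀ xs : ℕ → X, WeaklyNull xs →
      limsup (fun n => ‖xs n‖) atTop < limsup (fun n => ‖y + T (xs n)‖) atTop

def PropertyM (X : Type*) [NormedAddCommGroup X] [NormedSpace ℝ X] : Prop :=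
  ∀ x y : X, ‖y‖ ≤ ‖x‖ → ∀ xs : ℕ → X, WeaklyNull xs →
    limsup (fun n => ‖y + xs n‖) atTop ≤ limsup (fun n => ‖x + xs n‖) atTop

def OpialProperty (X : Type*) [NormedAddCommGroup X] [NormedSpace ℝ X] : Prop :=
  ∀ x : X, x ≠ 0 → ∀ xs : ℕ → X, WeaklyNull xs →
    limsup (fun n => ‖xs n‖) atTop < limsup (fun n => ‖x + xs n‖) atTop

def WeakMinimizingProperty (X Y : Type*) [NormedAddCommGroup X] [NormedSpace ℝ X]
    [NormedAddCommGroup Y] [NormedSpace ℝ Y] : Prop :=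
  ∀ T : X →L[ℝ] Y,
    (∃ xs : ℕ → X, (∀ n, ‖xs n‖ = 1) ∧
      Tendsto (fun n => ‖T (xs n)‖) atTop (𝓝 (minMod T)) ∧ ¬ WeaklyNull xs) →
    AttainsMinMod T

open Metric Set

section ReflexiveSpace

variable {X : Type*} [NormedAddCommGroup X] [NormedSpace ℝ X]

lemma continuous_apply_toWeakSpace_symm (f : StrongDual ℝ X) :
    Continuous fun w : WeakSpace ℝ X => f ((toWeakSpace ℝ X).symm w) :=
  WeakBilin.eval_continuous _ f

theorem isCompact_toWeakSpace_closedBall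
    (hX : Function.Surjective (NormedSpace.inclusionInDoubleDual ℝ X)) (r : ℝ) :
    IsCompact (toWeakSpace ℝ X '' closedBall 0 r) := by
  -- Banach–Alaoglu in the bidual, pulled back along the canonical isometry `X ≃ X**`.
  let e := LinearIsometryEquiv.ofSurjective (NormedSpace.inclusionInDoubleDualLi ℝ) hX
  have hcont : Continuous fun z : WeakDual ℝ (StrongDual ℝ X) =>
      toWeakSpace ℝ X (e.symm (WeakDual.toStrongDual z)) := by
    refine WeakBilin.continuous_of_continuous_eval _ fun f => ?_
    have h (z : StrongDual ℝ (StrongDual ℝ X)) : f (e.symm z) = z f :=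
      DFunLike.congr_fun (e.apply_symm_apply z) f
    exact (WeakDual.eval_continuous (𝕜 := ℝ) f).congr fun z => (h z).symm
  convert (WeakDual.isCompact_closedBall 0 r).image hcont using 1
  change _ = ((toWeakSpace ℝ X ∘ e.symm) ∘ WeakDual.toStrongDual) '' _
  rw [image_comp, image_preimage_eq _ WeakDual.toStrongDual.surjective, image_comp,
    e.symm.image_closedBall, e.symm.map_zero]

theorem TopologicalSpace.IsSeparable.exists_seq_dual_eq_zero_of_forall {s : Set X}
    (hs : IsSeparable s) :
    ∃ g : ℕ → StrongDual ℝ X, ∀ x ∈ s, (∀ j, g j x = 0) → x = 0 := by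
  obtain ⟨c, hc, hsc⟩ := hs
  obtain ⟨d, hd⟩ := (hc.insert 0).exists_eq_range (insert_nonempty _ _)
  choose g hg_norm hg_apply using fun j => exists_dual_vector'' ℝ (d j)
  refine ⟨g, fun x hx hgx => eq_of_forall_dist_le fun ε hε => ?_⟩
  have hxd : x ∈ closure (range d) := hd ▸ closure_mono (subset_insert 0 c) (hsc hx)
  obtain ⟨_, ⟨j, rfl⟩, hdist⟩ := Metric.mem_closure_iff.1 hxd (ε / 2) (half_pos hε)
  have hdj : ‖d j‖ ≤ dist x (d j) := calc
    ‖d j‖ = g j (d j - x) := by simp [hg_apply, hgx j]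
    _ ≤ ‖g j‖ * ‖d j - x‖ := (le_abs_self _).trans ((g j).le_opNorm _)
    _ ≤ 1 * ‖d j - x‖ := by gcongr; exact hg_norm j
    _ = dist x (d j) := by rw [one_mul, dist_eq_norm']
  calc dist x 0 = ‖x‖ := dist_zero_right x
    _ ≤ ‖d j‖ + dist x (d j) := by simpa [dist_eq_norm] using norm_le_norm_add_norm_sub' x (d j)
    _ ≤ ε := by linarith

theorem exists_subseq_forall_tendsto_dual_apply {u : ℕ → X} {R : ℝ} (hu : ∀ n, ‖u n‖ ≤ R)
    (g : ℕ → StrongDual ℝ X) :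
    ∃ φ : ℕ → ℕ, StrictMono φ ∧
      ∃ a : ℕ → ℝ, ∀ j, Tendsto (fun n => g j (u (φ n))) atTop (𝓝 (a j)) := by
  have hK : IsCompact (univ.pi fun j => closedBall (0 : ℝ) (‖g j‖ * R)) :=
    isCompact_univ_pi fun _ => isCompact_closedBall _ _
  have hmem (n : ℕ) : (fun j => g j (u n)) ∈ univ.pi fun j => closedBall (0 : ℝ) (‖g j‖ * R) :=
    fun j _ => mem_closedBall_zero_iff.2 ((g j).le_opNorm_of_le (hu n))
  obtain ⟨a, -, φ, hφ, ha⟩ := hK.tendsto_subseq hmem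
  exact ⟨φ, hφ, a, tendsto_pi_nhds.1 ha⟩

theorem exists_subseq_weakly_tendsto
    (hX : Function.Surjective (NormedSpace.inclusionInDoubleDual ℝ X))
    {u : ℕ → X} {R : ℝ} (hu : ∀ n, ‖u n‖ ≤ R) :
    ∃ φ : ℕ → ℕ, StrictMono φ ∧
      ∃ x : X, ∀ f : StrongDual ℝ X, Tendsto (fun n => f (u (φ n))) atTop (𝓝 (f x)) := by
  set Z := (Submodule.span ℝ (range u)).topologicalClosure
  have hZ_closed : IsClosed (toWeakSpace ℝ X '' Z) := by
    rw [← (Submodule.isClosed_topologicalClosure _).closure_eq, Z.convex.toWeakSpace_closure ℝ]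
    exact isClosed_closure
  obtain ⟨g, hg⟩ : ∃ g : ℕ → StrongDual ℝ X, ∀ x ∈ Z, (∀ j, g j x = 0) → x = 0 :=
    (countable_range u).isSeparable.span.closure.exists_seq_dual_eq_zero_of_forall
  obtain ⟨φ, hφ, a, ha⟩ := exists_subseq_forall_tendsto_dual_apply hu g
  set v : ℕ → WeakSpace ℝ X := fun n => toWeakSpace ℝ X (u (φ n))
  have hK := isCompact_toWeakSpace_closedBall hX R
  have hvK : ∀ᶠ n in atTop, v n ∈ toWeakSpace ℝ X '' closedBall 0 R :=
    Eventually.of_forall fun n => mem_image_of_mem _ (mem_closedBall_zero_iff.2 (hu (φ n)))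
  have hcluster : ∀ w, MapClusterPt w atTop v →
      ∃ x ∈ Z, toWeakSpace ℝ X x = w ∧ ∀ j, g j x = a j := by
    intro w hw
    obtain ⟨x, hxZ, rfl⟩ := hZ_closed.mem_of_mapClusterPt hw (Eventually.of_forall fun n =>
      mem_image_of_mem _ (Submodule.le_topologicalClosure _ (Submodule.subset_span ⟨φ n, rfl⟩)))
    have hgj (j : ℕ) : MapClusterPt (g j x) atTop fun n => g j (u (φ n)) :=
      (continuous_apply_toWeakSpace_symm (g j)).continuousAt.mapClusterPt hw
    exact ⟨x, hxZ, rfl, fun j => eq_of_nhds_neBot ((hgj j).clusterPt.mono (ha j))⟩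
  obtain ⟨w₀, -, hw₀⟩ := hK.exists_mapClusterPt (le_principal_iff.2 hvK)
  obtain ⟨x₀, hx₀Z, rfl, hx₀a⟩ := hcluster w₀ hw₀
  have hv : Tendsto v atTop (𝓝 (toWeakSpace ℝ X x₀)) := by
    refine hK.tendsto_nhds_of_unique_mapClusterPt hvK fun w _ hw => ?_
    obtain ⟨x, hxZ, rfl, hxa⟩ := hcluster w hw
    congr 1
    exact sub_eq_zero.1 (hg _ (Z.sub_mem hxZ hx₀Z) fun j => by rw [map_sub, hxa, hx₀a, sub_self])
  exact ⟨φ, hφ, x₀, fun f => ((continuous_apply_toWeakSpace_symm f).tendsto _).comp hv⟩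


theorem exists_subseq_weakly_tendsto_ne_zero
    (hX : Function.Surjective (NormedSpace.inclusionInDoubleDual ℝ X))
    {u : ℕ → X} {R : ℝ} (hu : ∀ n, ‖u n‖ ≤ R) (hnull : ¬ WeaklyNull u) :
    ∃ φ : ℕ → ℕ, StrictMono φ ∧
      ∃ x ≠ 0, ∀ f : StrongDual ℝ X, Tendsto (fun n => f (u (φ n))) atTop (𝓝 (f x)) := by
  obtain ⟨f, hf⟩ := not_forall.1 hnull
  obtain ⟨s, hs, hfreq⟩ := not_tendsto_iff_exists_frequently_notMem.1 hf
  obtain ⟨ψ, hψ, hψs⟩ := extraction_of_frequently_atTop hfreq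
  obtain ⟨φ, hφ, x, hx⟩ := exists_subseq_weakly_tendsto hX fun n => hu (ψ n)
  refine ⟨ψ ∘ φ, hψ.comp hφ, x, ?_, hx⟩
  rintro rfl
  obtain ⟨n, hn⟩ := ((hx f).eventually (by rwa [map_zero])).exists
  exact hψs (φ n) hn

end ReflexiveSpace

section MinimumModulus

variable {X Y : Type*} [NormedAddCommGroup X] [NormedSpace ℝ X]
  [NormedAddCommGroup Y] [NormedSpace ℝ Y]

theorem minMod_nonneg (T : X →L[ℝ] Y) : 0 ≤ minMod T :=
  Real.sInf_nonneg fun _ ⟨_, _, hr⟩ => hr ▸ norm_nonneg _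

theorem minMod_mul_norm_le (T : X →L[ℝ] Y) (x : X) : minMod T * ‖x‖ ≤ ‖T x‖ := by
  rcases eq_or_ne x 0 with rfl | hx
  · simp
  have hle : minMod T ≤ ‖T (‖x‖⁻¹ • x)‖ :=
    csInf_le ⟨0, fun _ ⟨_, _, hr⟩ => hr ▸ norm_nonneg _⟩ ⟨_, norm_smul_inv_norm hx, rfl⟩
  rw [map_smul, norm_smul, norm_inv, norm_norm] at hle
  rwa [le_inv_mul_iff₀ (norm_pos_iff.2 hx), mul_comm] at hle

theorem attainsMinMod_of_tendsto {T : X →L[ℝ] Y} {xs : ℕ → X} {x : X} (hxs : ∀ n, ‖xs n‖ = 1)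
    (hmin : Tendsto (fun n => ‖T (xs n)‖) atTop (𝓝 (minMod T))) (hx : x ≠ 0)
    (hT : Tendsto (fun n => T (xs n)) atTop (𝓝 (T x))) : AttainsMinMod T := by
  have hTx : ‖T x‖ = minMod T := tendsto_nhds_unique hT.norm hmin
  have hconv : Tendsto (fun n => minMod T • xs n) atTop (𝓝 (minMod T • x)) := by
    rw [tendsto_iff_norm_sub_tendsto_zero]
    refine squeeze_zero (fun _ => norm_nonneg _) (fun n => ?_)
      (tendsto_iff_norm_sub_tendsto_zero.1 hT)
    rw [← smul_sub, norm_smul, Real.norm_of_nonneg (minMod_nonneg T), ← map_sub]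
    exact minMod_mul_norm_le T _
  have hnorm : minMod T * ‖x‖ = minMod T := by
    have hconst : Tendsto (fun n => ‖minMod T • xs n‖) atTop (𝓝 (minMod T)) := by
      simp only [norm_smul, hxs, mul_one, Real.norm_of_nonneg (minMod_nonneg T)]
      exact tendsto_const_nhds
    simpa only [norm_smul, Real.norm_of_nonneg (minMod_nonneg T)] using
      tendsto_nhds_unique hconv.norm hconst
  refine ⟨‖x‖⁻¹ • x, norm_smul_inv_norm hx, ?_⟩
  rw [map_smul, norm_smul, norm_inv, norm_norm, hTx,
    inv_mul_eq_iff_eq_mul₀ (norm_ne_zero_iff.2 hx), mul_comm, hnorm]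

end MinimumModulus

theorem stmt15_general {Y : Type*} [NormedAddCommGroup Y] [NormedSpace ℝ Y]
    (hSchur : ∀ (y : ℕ → Y) (l : Y),
      (∀ f : Y →L[ℝ] ℝ, Tendsto (fun n => f (y n)) atTop (𝓝 (f l))) →
      Tendsto y atTop (𝓝 l)) :
    ∀ (X : Type) [NormedAddCommGroup X] [NormedSpace ℝ X] [CompleteSpace X],
      Function.Surjective ⇑(NormedSpace.inclusionInDoubleDual ℝ X) →
      WeakMinimizingProperty X Y := by
  intro X _ _ _ hX T ⟨xs, hxs, hmin, hnull⟩
  obtain ⟨φ, hφ, x, hx, hweak⟩ :=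
    exists_subseq_weakly_tendsto_ne_zero hX (fun n => (hxs n).le) hnull
  exact attainsMinMod_of_tendsto (fun n => hxs (φ n)) (hmin.comp hφ.tendsto_atTop) hx
    (hSchur _ _ fun f => hweak (f.comp T))

theorem stmt15 {Y : Type*} [NormedAddCommGroup Y] [NormedSpace ℝ Y] [CompleteSpace Y]
    (hSchur : ∀ (y : ℕ → Y) (l : Y),
      (∀ f : Y →L[ℝ] ℝ, Tendsto (fun n => f (y n)) atTop (𝓝 (f l))) →
      Tendsto y atTop (𝓝 l)) :
    ∀ (X : Type) [NormedAddCommGroup X] [NormedSpace ℝ X] [CompleteSpace X],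
      Function.Surjective ⇑(NormedSpace.inclusionInDoubleDual ℝ X) →
      WeakMinimizingProperty X Y :=
  stmt15_general hSchur
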